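/- arXiv:1708.07782 — 3 statements merged into one kernel-verified Lean document; each statement's English description precedes it below -/
import Mathlib

section
/- Let G be a finite group with subgroups B, U and an element n₀, let k be a field, σ: U → k^× a homomorphism, M ⊆ kG𝔟 a kG-submodule, and suppose the subspace 𝔲_σ·(kG𝔟) is one-dimensional, spanned by 𝔲_σn₀𝔟. Then either kG·𝔲_σn₀𝔟 ⊆ M, or M ⊆ (kG·𝔲_{σ*}n₀𝔟)^⊥, where σ*(u) = σ(u)^{-1} and ⊥ is with respect to the standard G-invariant form on kG𝔟. -/
/-! If `𝔲_σ` kills `M`, then `M ⟂ 𝔲_{σ*}n₀𝔟`, because `𝔲_{σ*}` is adjoint to `𝔲_σ`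
for the `G`-invariant form; as `M` is `G`-stable so is its orthogonal, hence
`M ⟂ kG·𝔲_{σ*}n₀𝔟`. Otherwise `𝔲_σ m ≠ 0` for some `m ∈ M`, and by one-dimensionality
`𝔲_σ m` is a nonzero multiple of `𝔲_σn₀𝔟`, which therefore lies in `M`. -/

open MonoidAlgebra

/-- The element `𝔟 = ∑_{b ∈ B} b` of the group algebra `kG`. -/
noncomputable def bSum (k : Type*) {G : Type*} [Field k] [Group G] (B : Subgroup G) [Fintype B] :
    MonoidAlgebra k G :=
  ∑ b : B, of k G (b : G)

/-- The element `𝔲_σ = ∑_{u ∈ U} σ(u)·u` of the group algebra `kG`. -/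
noncomputable def uSigma (k : Type*) {G : Type*} [Field k] [Group G] (U : Subgroup G)
    [Fintype U] (σ : U →* kˣ) : MonoidAlgebra k G :=
  ∑ u : U, ((σ u : kˣ) : k) • of k G (u : G)

/-- The element `a·𝔟` of the submodule `kG𝔟 = span {𝔟}`, for `a ∈ kG`. -/
noncomputable def elemS {k G : Type*} [Field k] [Group G] (B : Subgroup G) [Fintype B]
    (a : MonoidAlgebra k G) : ↥(Submodule.span (MonoidAlgebra k G) {bSum k B}) :=
  ⟨a * bSum k B, by rw [← smul_eq_mul]
                    exact Submodule.smul_mem _ _ (Submodule.mem_span_singleton_self _)⟩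

/-- Left multiplication by a group element on the submodule `kG𝔟`. -/
noncomputable def smulG {k G : Type*} [Field k] [Group G]
    (S : Submodule (MonoidAlgebra k G) (MonoidAlgebra k G)) (x : G) (a : ↥S) : ↥S :=
  ⟨of k G x * (a : MonoidAlgebra k G), by
    rw [← smul_eq_mul]; exact S.smul_mem _ a.2⟩

section InvariantForm

variable {k G V : Type*} [CommRing k] [Group G] [AddCommGroup V] [Module k V]
  [Module (MonoidAlgebra k G) V] {Φ : V →ₗ[k] V →ₗ[k] k}

lemma apply_of_smul_right
    (hΦ : ∀ (g : G) a b, Φ (of k G g • a) (of k G g • b) = Φ a b) (g : G) (a b : V) :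
    Φ a (of k G g • b) = Φ (of k G g⁻¹ • a) b := by
  conv_lhs => rw [← one_smul (MonoidAlgebra k G) a, ← map_one (of k G), ← mul_inv_cancel g,
    map_mul, mul_smul]
  exact hΦ _ _ _

variable [IsScalarTower k (MonoidAlgebra k G) V]

lemma apply_eq_zero_of_mem_span_singleton
    (hΦ : ∀ (g : G) a b, Φ (of k G g • a) (of k G g • b) = Φ a b)
    (M : Submodule (MonoidAlgebra k G) V) {w : V} (hw : ∀ m ∈ M, Φ m w = 0)
    {m y : V} (hm : m ∈ M) (hy : y ∈ Submodule.span (MonoidAlgebra k G) {w}) :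
    Φ m y = 0 := by
  obtain ⟨a, rfl⟩ := Submodule.mem_span_singleton.mp hy
  clear hy
  induction a using MonoidAlgebra.induction_on generalizing m with
  | of g => rw [apply_of_smul_right hΦ]; exact hw _ (M.smul_mem _ hm)
  | add a b ha hb => rw [add_smul, map_add, ha hm, hb hm, add_zero]
  | smul r a ha => rw [smul_assoc, map_smul, ha hm, smul_zero]

end InvariantForm

section uSigma

variable {k G V : Type*} [Field k] [Group G] [AddCommGroup V] [Module k V]
  [Module (MonoidAlgebra k G) V] [IsScalarTower k (MonoidAlgebra k G) V]
  (U : Subgroup G) [Fintype U] (σ : U →* kˣ)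

lemma uSigma_smul (v : V) :
    uSigma k U σ • v = ∑ u : U, ((σ u : kˣ) : k) • of k G (u : G) • v := by
  simp only [uSigma, Finset.sum_smul, smul_assoc]

/-- `𝔲_{σ*}` is the adjoint of `𝔲_σ` for a `G`-invariant form. -/
lemma apply_uSigma_inv_smul_right {Φ : V →ₗ[k] V →ₗ[k] k}
    (hΦ : ∀ (g : G) a b, Φ (of k G g • a) (of k G g • b) = Φ a b) (a b : V) :
    Φ a (uSigma k U (invMonoidHom.comp σ) • b) = Φ (uSigma k U σ • a) b := by
  rw [uSigma_smul, uSigma_smul, map_sum, map_sum, LinearMap.sum_apply]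
  refine Fintype.sum_equiv (Equiv.inv U) _ _ fun u => ?_
  simp only [Equiv.inv_apply, map_smul, LinearMap.smul_apply, apply_of_smul_right hΦ,
    MonoidHom.comp_apply, invMonoidHom_apply, map_inv, Units.val_inv_eq_inv_val,
    InvMemClass.coe_inv]

end uSigma

theorem submodule_dichotomy_general {k G : Type*} [Field k] [Group G]
    (B U : Subgroup G) [Fintype B] [Fintype U] (n₀ : G) (σ : U →* kˣ)
    (Φ : ↥(Submodule.span (MonoidAlgebra k G) {bSum k B}) →ₗ[k]
        ↥(Submodule.span (MonoidAlgebra k G) {bSum k B}) →ₗ[k] k)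
    (hG : ∀ (x : G) a b, Φ (smulG _ x a) (smulG _ x b) = Φ a b)
    (hone : ∀ a : ↥(Submodule.span (MonoidAlgebra k G) {bSum k B}), ∃ c : k,
      uSigma k U σ * (a : MonoidAlgebra k G) =
        c • ((elemS B (uSigma k U σ * of k G n₀) : MonoidAlgebra k G)))
    (M : Submodule (MonoidAlgebra k G) ↥(Submodule.span (MonoidAlgebra k G) {bSum k B})) :
    Submodule.span (MonoidAlgebra k G) {elemS B (uSigma k U σ * of k G n₀)} ≤ M ∨
      (∀ m ∈ M, ∀ x ∈ Submodule.span (MonoidAlgebra k G)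
        {elemS B (uSigma k U (MonoidHom.comp invMonoidHom σ) * of k G n₀)}, Φ m x = 0) := by
  have hΦ : ∀ (g : G) a b, Φ (of k G g • a) (of k G g • b) = Φ a b := hG
  by_cases hkill : ∀ m ∈ M, uSigma k U σ • m = 0
  · have hw : elemS B (uSigma k U (invMonoidHom.comp σ) * of k G n₀) =
        uSigma k U (invMonoidHom.comp σ) • elemS B (of k G n₀) :=
      Subtype.ext (mul_assoc _ _ _)
    refine Or.inr fun m hm y hy => apply_eq_zero_of_mem_span_singleton hΦ M (fun m hm => ?_) hm hy
    rw [hw, apply_uSigma_inv_smul_right U σ hΦ, hkill m hm, map_zero, LinearMap.zero_apply]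
  · push Not at hkill
    obtain ⟨m, hm, hne⟩ := hkill
    obtain ⟨c, hc⟩ := hone m
    have hc : uSigma k U σ • m = c • elemS B (uSigma k U σ * of k G n₀) := Subtype.ext hc
    have hc0 : c ≠ 0 := by rintro rfl; exact hne (by rw [hc, zero_smul])
    have hmem : c • elemS B (uSigma k U σ * of k G n₀) ∈ M.restrictScalars k :=
      hc ▸ M.smul_mem _ hm
    exact Or.inl ((Submodule.span_singleton_le_iff_mem _ _).mpr
      ((Submodule.smul_mem_iff _ hc0).mp hmem))

/-- The submodule-theorem dichotomy: if `𝔲_σ·(kG𝔟)` is one-dimensional, spanned by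
`𝔲_σn₀𝔟`, then any `kG`-submodule `M` of `kG𝔟` satisfies `kG·𝔲_σn₀𝔟 ⊆ M` or
`M ⊆ (kG·𝔲_{σ*}n₀𝔟)^⊥`. -/
theorem submodule_dichotomy {k G : Type*} [Field k] [Group G] [Fintype G]
    (B U : Subgroup G) [Fintype B] [Fintype U] [DecidableEq (G ⧸ B)] (n₀ : G) (σ : U →* kˣ)
    (Φ : ↥(Submodule.span (MonoidAlgebra k G) {bSum k B}) →ₗ[k]
        ↥(Submodule.span (MonoidAlgebra k G) {bSum k B}) →ₗ[k] k)
    (hΦ : ∀ g g' : G, Φ (elemS B (of k G g)) (elemS B (of k G g')) =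
      if (g : G ⧸ B) = (g' : G ⧸ B) then 1 else 0)
    (hsymm : ∀ a b, Φ a b = Φ b a)
    (hG : ∀ (x : G) a b, Φ (smulG _ x a) (smulG _ x b) = Φ a b)
    (hspan : elemS B (uSigma k U σ * of k G n₀) ≠ 0)
    (hone : ∀ a : ↥(Submodule.span (MonoidAlgebra k G) {bSum k B}), ∃ c : k,
      uSigma k U σ * (a : MonoidAlgebra k G) =
        c • ((elemS B (uSigma k U σ * of k G n₀) : MonoidAlgebra k G)))
    (M : Submodule (MonoidAlgebra k G) ↥(Submodule.span (MonoidAlgebra k G) {bSum k B})) :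
    Submodule.span (MonoidAlgebra k G) {elemS B (uSigma k U σ * of k G n₀)} ≤ M ∨
      (∀ m ∈ M, ∀ x ∈ Submodule.span (MonoidAlgebra k G)
        {elemS B (uSigma k U (MonoidHom.comp invMonoidHom σ) * of k G n₀)}, Φ m x = 0) :=
  submodule_dichotomy_general B U n₀ σ Φ hG hone M
end

section
/- In the setting of James' submodule theorem: let S_σ = kG·𝔲_σn₀𝔟 and S_{σ*} = kG·𝔲_{σ*}n₀𝔟 be submodules of kG𝔟 such that (a) every submodule M of kG𝔟 satisfies S_σ ⊆ M or M ⊆ S_{σ*}^⊥, and (b) ⟨𝔲_σn₀𝔟, 𝔲_{σ*}n₀𝔟⟩ ≠ 0. Then S_σ ∩ S_{σ*}^⊥ is the unique maximal proper kG-submodule of S_σ; in particular the quotient D_σ = S_σ/(S_σ ∩ S_{σ*}^⊥) is a simple kG-module. -/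
theorem covBy_of_forall_lt_iff_le {α : Type*} [Preorder α] {a b : α}
    (h : ∀ c, c < b ↔ c ≤ a) : a ⋖ b :=
  ⟨(h a).2 le_rfl, fun c hac hcb => ((h c).1 hcb).not_gt hac⟩

namespace Submodule

variable {R M : Type*} [Semiring R] [AddCommMonoid M] [Module R M]

/- `P` is only a set: the form is not assumed `G`-invariant, so `S_{σ*}^⊥` need not be a
`kG`-submodule. -/
theorem lt_iff_le_of_forall_le_or_subset {S K : Submodule R M} {P : Set M}
    (hK : (K : Set M) = (S : Set M) ∩ P) (hSP : ¬(S : Set M) ⊆ P)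
    (h : ∀ N : Submodule R M, S ≤ N ∨ (N : Set M) ⊆ P) (N : Submodule R M) :
    N < S ↔ N ≤ K := by
  have hKS : K ≤ S := fun x hx => (hK ▸ hx : x ∈ (S : Set M) ∩ P).1
  refine ⟨fun hNS x hx => ?_, fun hNK => ?_⟩
  · have hNP : (N : Set M) ⊆ P := (h N).resolve_left hNS.not_ge
    exact (hK ▸ ⟨hNS.le hx, hNP hx⟩ : x ∈ (K : Set M))
  · obtain ⟨x, hxS, hxP⟩ := Set.not_subset.1 hSP
    have hxK : x ∉ K := fun hx => hxP (hK ▸ hx : x ∈ (S : Set M) ∩ P).2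
    exact hNK.trans_lt (SetLike.lt_iff_le_and_exists.2 ⟨hKS, x, hxS, hxK⟩)

end Submodule

theorem unique_maximal_submodule_of_dichotomy_general {k G : Type*} [Field k] [Group G]
    {V : Type*} [AddCommGroup V] [Module k V] [Module (MonoidAlgebra k G) V]
    (Φ : V →ₗ[k] V →ₗ[k] k) (v vstar : V)
    -- (a): the dichotomy holds for every submodule `M` of `V = kG𝔟`
    (ha : ∀ M : Submodule (MonoidAlgebra k G) V,
      Submodule.span (MonoidAlgebra k G) {v} ≤ M ∨
        ∀ m ∈ M, ∀ y ∈ Submodule.span (MonoidAlgebra k G) {vstar}, Φ m y = 0)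
    -- (b): `⟨v, v*⟩ ≠ 0`
    (hb : Φ v vstar ≠ 0)
    -- `K = S_σ ∩ S_{σ*}^⊥`
    (K : Submodule (MonoidAlgebra k G) V)
    (hK : ∀ x, x ∈ K ↔ x ∈ Submodule.span (MonoidAlgebra k G) {v} ∧
      ∀ y ∈ Submodule.span (MonoidAlgebra k G) {vstar}, Φ x y = 0) :
    K < Submodule.span (MonoidAlgebra k G) {v} ∧
      (∀ M : Submodule (MonoidAlgebra k G) V,
        M < Submodule.span (MonoidAlgebra k G) {v} → M ≤ K) ∧
      IsSimpleModule (MonoidAlgebra k G)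
        (↥(Submodule.span (MonoidAlgebra k G) {v}) ⧸
          Submodule.comap (Submodule.span (MonoidAlgebra k G) {v}).subtype K) := by
  have hv_not_perp : ¬∀ y ∈ Submodule.span (MonoidAlgebra k G) {vstar}, Φ v y = 0 :=
    fun h => hb (h vstar (Submodule.mem_span_singleton_self vstar))
  have hmax := Submodule.lt_iff_le_of_forall_le_or_subset (Set.ext hK)
    (fun h => hv_not_perp (h (Submodule.mem_span_singleton_self v))) ha
  have hcov : K ⋖ Submodule.span (MonoidAlgebra k G) {v} := covBy_of_forall_lt_iff_le hmax
  exact ⟨hcov.lt, fun M => (hmax M).1, (covBy_iff_quot_is_simple hcov.le).1 hcov⟩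

/-- James' submodule theorem, abstract form: `V` is a `kG`-module (playing the role of
`kG𝔟`) with a bilinear form `Φ`, and `S_σ = kG·v`, `S_{σ*} = kG·v*` (with
`v = 𝔲_σn₀𝔟`, `v* = 𝔲_{σ*}n₀𝔟`) satisfy the dichotomy (a) and `⟨v, v*⟩ ≠ 0` (b).
Then `K = S_σ ∩ S_{σ*}^⊥` is the unique maximal proper submodule of `S_σ`, so the
quotient `D_σ = S_σ/K` is a simple `kG`-module. -/
theorem unique_maximal_submodule_of_dichotomy {k G : Type*} [Field k] [Group G] [Fintype G]
    {V : Type*} [AddCommGroup V] [Module k V] [Module (MonoidAlgebra k G) V]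
    [IsScalarTower k (MonoidAlgebra k G) V]
    (Φ : V →ₗ[k] V →ₗ[k] k) (v vstar : V)
    -- (a): the dichotomy holds for every submodule `M` of `V = kG𝔟`
    (ha : ∀ M : Submodule (MonoidAlgebra k G) V,
      Submodule.span (MonoidAlgebra k G) {v} ≤ M ∨
        ∀ m ∈ M, ∀ y ∈ Submodule.span (MonoidAlgebra k G) {vstar}, Φ m y = 0)
    -- (b): `⟨v, v*⟩ ≠ 0`
    (hb : Φ v vstar ≠ 0)
    -- `K = S_σ ∩ S_{σ*}^⊥`
    (K : Submodule (MonoidAlgebra k G) V)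
    (hK : ∀ x, x ∈ K ↔ x ∈ Submodule.span (MonoidAlgebra k G) {v} ∧
      ∀ y ∈ Submodule.span (MonoidAlgebra k G) {vstar}, Φ x y = 0) :
    K < Submodule.span (MonoidAlgebra k G) {v} ∧
      (∀ M : Submodule (MonoidAlgebra k G) V,
        M < Submodule.span (MonoidAlgebra k G) {v} → M ≤ K) ∧
      IsSimpleModule (MonoidAlgebra k G)
        (↥(Submodule.span (MonoidAlgebra k G) {v}) ⧸
          Submodule.comap (Submodule.span (MonoidAlgebra k G) {v}).subtype K) :=
  unique_maximal_submodule_of_dichotomy_general Φ v vstar ha hb K hK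
end

section
/- Let U be a finite group, B a finite group containing representatives, and G ⊇ U a finite group with a subgroup B and element n₀ such that the map u ↦ un₀B is injective on U. Let k be a field and let Σ be a set of pairwise distinct homomorphisms σ: U → k^×. Then the elements {𝔲_σn₀𝔟 : σ ∈ Σ} are linearly independent in kG𝔟, where 𝔲_σ = ∑_{u∈U}σ(u)u and 𝔟 = ∑_{b∈B}b. Hence the submodule they generate has dimension at least |Σ|. -/
/-!
The coefficients of `𝔲_σ n₀ 𝔟` at the elements `u n₀` (`u ∈ U`) are exactly the values
`σ u`: the injectivity of `u ↦ u n₀ B` means that `u n₀ b = u' n₀` forces `u = u'` and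
`b = 1`. So a `k`-linear map sends the family to the characters themselves, which are
linearly independent by Dedekind's lemma.
-/

open MonoidAlgebra

theorem mul_mul_eq_mul_iff_of_injective_mk {G : Type*} [Group G] {U B : Subgroup G} {n₀ : G}
    (hinj : ∀ u u' : U, (((u : G) * n₀ : G) : G ⧸ B) = (((u' : G) * n₀ : G) : G ⧸ B) →
      u = u')
    (u u₀ : U) (b : B) : (u : G) * n₀ * b = u₀ * n₀ ↔ u = u₀ ∧ b = 1 := by
  constructor
  · intro h
    obtain rfl : u = u₀ := hinj u u₀ <| QuotientGroup.eq.mpr <| by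
      rw [← h, inv_mul_cancel_left]; exact b.2
    exact ⟨rfl, Subtype.ext (mul_eq_left.mp h)⟩
  · rintro ⟨rfl, rfl⟩
    simp

theorem uSigma_mul_of_mul_bSum {k G : Type*} [Field k] [Group G] (U B : Subgroup G) [Fintype U]
    [Fintype B] (σ : U →* kˣ) (n₀ : G) :
    uSigma k U σ * of k G n₀ * bSum k B =
      ∑ u : U, ∑ b : B, ((σ u : kˣ) : k) • single ((u : G) * n₀ * b) (1 : k) := by
  simp only [uSigma, bSum, Finset.sum_mul, Finset.mul_sum, smul_mul_assoc, of_apply,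
    single_mul_single, one_mul]
  exact Finset.sum_comm

theorem coeff_uSigma_mul_of_mul_bSum {k G : Type*} [Field k] [Group G] {U B : Subgroup G}
    [Fintype U] [Fintype B] {n₀ : G}
    (hinj : ∀ u u' : U, (((u : G) * n₀ : G) : G ⧸ B) = (((u' : G) * n₀ : G) : G ⧸ B) →
      u = u')
    (σ : U →* kˣ) (u₀ : U) :
    (uSigma k U σ * of k G n₀ * bSum k B).coeff (u₀ * n₀) = σ u₀ := by
  classical
  rw [uSigma_mul_of_mul_bSum]
  simp [coeff_sum, coeff_single, Finsupp.single_apply,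
    mul_mul_eq_mul_iff_of_injective_mk hinj, ite_and]

theorem linearIndependent_units_val_comp {M k : Type*} [Monoid M] [Field k] (s : Set (M →* kˣ)) :
    LinearIndependent k (fun σ : s => fun m => ((σ.1 m : kˣ) : k)) :=
  (linearIndependent_monoidHom M k).comp (fun σ : s => (Units.coeHom k).comp σ.1)
    fun _ _ h => Subtype.ext <| (MonoidHom.cancel_left Units.val_injective).mp h

theorem LinearIndependent.natCard_le_finrank_span {ι k A M : Type*} [Field k] [Semiring A]
    [Algebra k A] [AddCommGroup M] [Module A M] [Module k M] [IsScalarTower k A M]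
    [Module.Finite k M] {v : ι → M} (hv : LinearIndependent k v) :
    Nat.card ι ≤ Module.finrank k (Submodule.span A (Set.range v)) := by
  have := hv.finite
  have := Fintype.ofFinite ι
  rw [Nat.card_eq_fintype_card, ← finrank_span_eq_card hv]
  exact Submodule.finrank_mono (Submodule.span_le_restrictScalars k A (Set.range v))

/-- If `u ↦ un₀B` is injective on `U`, then for any set `Σ` of homomorphisms `U → k^×` the
elements `𝔲_σn₀𝔟` (`σ ∈ Σ`) are linearly independent in `kG𝔟`; hence the submodule they
generate has dimension at least `|Σ|`. -/
theorem uSigma_n0_b_linearIndependent {k G : Type*} [Field k] [Group G] [Fintype G]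
    (U B : Subgroup G) [Fintype U] [Fintype B] (n₀ : G)
    (hinj : ∀ u u' : U, (((u : G) * n₀ : G) : G ⧸ B) = (((u' : G) * n₀ : G) : G ⧸ B) → u = u')
    (chars : Set (U →* kˣ)) :
    LinearIndependent k (fun σ : chars => uSigma k U (σ : U →* kˣ) * of k G n₀ * bSum k B) ∧
      Nat.card chars ≤ Module.finrank k ↥(Submodule.span (MonoidAlgebra k G)
        (Set.range fun σ : chars => uSigma k U (σ : U →* kˣ) * of k G n₀ * bSum k B)) := by
  let coeffsAlong : MonoidAlgebra k G →ₗ[k] (U → k) :=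
    LinearMap.pi fun u => Finsupp.lapply ((u : G) * n₀) ∘ₗ (coeffLinearEquiv k).toLinearMap
  have hli : LinearIndependent k
      (fun σ : chars => uSigma k U (σ : U →* kˣ) * of k G n₀ * bSum k B) := by
    refine .of_comp coeffsAlong ?_
    convert linearIndependent_units_val_comp chars with σ u
    exact coeff_uSigma_mul_of_mul_bSum hinj σ.1 u
  exact ⟨hli, hli.natCard_le_finrank_span⟩
end
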